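/- Let m ≥ 1, let Λ > 0, and let v be a real-valued function on subsets of {1, …, m} that is nonnegative (v(S) ≥ 0 for all S) and has marginal values at most Λ (|v(S ∪ {g}) − v(S)| ≤ Λ for all S and g). Let V be the multilinear extension of v, let b_k(ℓ, r) = m · max(0, min(r, k/m) − max(ℓ, (k−1)/m)) for k ∈ {1, …, m}, and define the cake valuation f by f ℓ r = V(b_1(ℓ, r), …, b_m(ℓ, r)) for 0 ≤ ℓ ≤ r ≤ 1. Then f is nonnegative (f ℓ r ≥ 0 for all 0 ≤ ℓ ≤ r ≤ 1) and (mΛ)-Lipschitz: |f ℓ r − f ℓ' r'| ≤ mΛ (|ℓ − ℓ'| + |r − r'|) for all 0 ≤ ℓ ≤ r ≤ 1 and 0 ≤ ℓ' ≤ r' ≤ 1. -/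

import Mathlib

/-- The multilinear extension of a set function `v` on subsets of `Fin m`:
`V(x) = Σ_{T ⊆ [m]} (∏_{j ∈ T} x_j)(∏_{j ∉ T} (1 - x_j)) v(T)`. -/
noncomputable def mle (m : ℕ) (v : Finset (Fin m) → ℝ) (x : Fin m → ℝ) : ℝ :=
  ∑ T : Finset (Fin m), (∏ j ∈ T, x j) * (∏ j ∈ Tᶜ, (1 - x j)) * v T

/-- The `k`-th component of the `CakeConstruction` map: `m` times the length
of `[ℓ, r] ∩ [(k-1)/m, k/m]`. -/
noncomputable def bcomp (m k : ℕ) (ℓ r : ℝ) : ℝ :=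
  (m : ℝ) * max 0 (min r ((k : ℝ) / m) - max ℓ (((k : ℝ) - 1) / m))

/-!
Nonnegativity holds because `V(x)` is a convex combination of the values of `v` when
`x ∈ [0,1]^m`. For the Lipschitz bound, `V` is affine in each coordinate `x_j`, with slope an
average of the marginals `v(S ∪ {j}) - v(S)`; so `V` is `Λ`-Lipschitz for the `ℓ¹` distance on
the cube (change one coordinate at a time). It remains to bound the `ℓ¹` variation of `b`:
`b_{k+1}(ℓ, r)` is `m` times the increment of the clamp `t ↦ max ℓ (min r t)` over the cell
`[k/m, (k+1)/m]`. For nested intervals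
`[ℓ', r'] ⊆ [ℓ, r]` the difference of the two clamps is monotone in `t`, so the sum
`∑ₖ |b_k(ℓ, r) - b_k(ℓ', r')|` telescopes to at most `m (ℓ' - ℓ + r - r')`. Two arbitrary
intervals are compared through their hull.
-/

open Finset Function

theorem abs_sub_le_mul_sum_of_abs_update_sub_le {ι : Type*} [Fintype ι] [DecidableEq ι]
    {S : Set ℝ} {F : (ι → ℝ) → ℝ} {L : ℝ}
    (hF : ∀ z : ι → ℝ, (∀ i, z i ∈ S) → ∀ j, ∀ t ∈ S, |F (update z j t) - F z| ≤ L * |t - z j|)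
    {x y : ι → ℝ} (hx : ∀ i, x i ∈ S) (hy : ∀ i, y i ∈ S) :
    |F x - F y| ≤ L * ∑ i, |x i - y i| := by
  suffices key : ∀ s : Finset ι, |F (s.piecewise y x) - F x| ≤ L * ∑ i ∈ s, |x i - y i| by
    simpa [abs_sub_comm (F x)] using key univ
  intro s
  induction s using Finset.induction_on with
  | empty => simp
  | @insert a s ha ih =>
    set z := s.piecewise y x
    have hz : ∀ i, z i ∈ S := fun i => by by_cases h : i ∈ s <;> simp [z, h, hx i, hy i]
    have hza : z a = x a := s.piecewise_eq_of_notMem _ _ ha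
    have step := hF z hz a (y a) (hy a)
    rw [hza, abs_sub_comm (y a)] at step
    rw [piecewise_insert, sum_insert ha, mul_add]
    calc _ ≤ |F (update z a (y a)) - F z| + |F z - F x| := abs_sub_le _ _ _
      _ ≤ _ := add_le_add step ih

section MultilinearExtension

variable {m : ℕ} (v : Finset (Fin m) → ℝ)

lemma mle_nonneg (hv : ∀ S, 0 ≤ v S) {x : Fin m → ℝ} (hx : ∀ i, x i ∈ Set.Icc 0 1) :
    0 ≤ mle m v x :=
  sum_nonneg fun T _ => mul_nonneg (mul_nonneg (prod_nonneg fun i _ => (hx i).1)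
    (prod_nonneg fun i _ => sub_nonneg.2 (hx i).2)) (hv T)

lemma mle_eq_sum_powerset_erase (x : Fin m → ℝ) (j : Fin m) :
    mle m v x = ∑ S ∈ (univ.erase j).powerset,
      (∏ i ∈ S, x i) * (∏ i ∈ univ.erase j \ S, (1 - x i)) *
        ((1 - x j) * v S + x j * v (insert j S)) := by
  have hj : j ∉ univ.erase j := notMem_erase j univ
  have huniv : (univ : Finset (Finset (Fin m))) = (insert j (univ.erase j)).powerset := by
    rw [insert_erase (mem_univ j), powerset_univ]
  rw [mle, huniv, sum_powerset_insert hj, ← sum_add_distrib]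
  refine sum_congr rfl fun S hS => ?_
  have hjS : j ∉ S := fun h => hj (mem_powerset.1 hS h)
  have hcompl : Sᶜ.erase j = univ.erase j \ S := by ext; simp
  rw [prod_insert hjS, compl_insert, ← mul_prod_erase Sᶜ _ (mem_compl.2 hjS), hcompl]
  ring

lemma mle_update_sub (x : Fin m → ℝ) (j : Fin m) (t : ℝ) :
    mle m v (update x j t) - mle m v x = (t - x j) * ∑ S ∈ (univ.erase j).powerset,
      (∏ i ∈ S, x i) * (∏ i ∈ univ.erase j \ S, (1 - x i)) * (v (insert j S) - v S) := by
  rw [mle_eq_sum_powerset_erase v _ j, mle_eq_sum_powerset_erase v x j, ← sum_sub_distrib,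
    mul_sum]
  refine sum_congr rfl fun S hS => ?_
  have hjS : j ∉ S := fun h => notMem_erase j univ (mem_powerset.1 hS h)
  have hS_prod : ∏ i ∈ S, update x j t i = ∏ i ∈ S, x i :=
    prod_congr rfl fun i hi => update_of_ne (ne_of_mem_of_not_mem hi hjS) _ _
  have hSc_prod :
      ∏ i ∈ univ.erase j \ S, (1 - update x j t i) = ∏ i ∈ univ.erase j \ S, (1 - x i) :=
    prod_congr rfl fun i hi => by rw [update_of_ne (mem_erase.1 (mem_sdiff.1 hi).1).1]
  rw [hS_prod, hSc_prod, update_self]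
  ring

lemma abs_mle_update_sub_le {Λ : ℝ} (hv : ∀ S g, |v (insert g S) - v S| ≤ Λ) {x : Fin m → ℝ}
    (hx : ∀ i, x i ∈ Set.Icc 0 1) (j : Fin m) (t : ℝ) :
    |mle m v (update x j t) - mle m v x| ≤ Λ * |t - x j| := by
  rw [mle_update_sub, abs_mul, mul_comm]
  refine mul_le_mul_of_nonneg_right ?_ (abs_nonneg _)
  set w := fun S => (∏ i ∈ S, x i) * ∏ i ∈ univ.erase j \ S, (1 - x i)
  have hw : ∀ S, 0 ≤ w S := fun S =>
    mul_nonneg (prod_nonneg fun i _ => (hx i).1) (prod_nonneg fun i _ => sub_nonneg.2 (hx i).2)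
  have hw_sum : ∑ S ∈ (univ.erase j).powerset, w S = 1 := by
    rw [← prod_add]; simp
  calc |∑ S ∈ (univ.erase j).powerset, w S * (v (insert j S) - v S)|
      ≤ ∑ S ∈ (univ.erase j).powerset, |w S * (v (insert j S) - v S)| := abs_sum_le_sum_abs _ _
    _ ≤ ∑ S ∈ (univ.erase j).powerset, w S * Λ := sum_le_sum fun S _ => by
        rw [abs_mul, abs_of_nonneg (hw S)]; exact mul_le_mul_of_nonneg_left (hv S j) (hw S)
    _ = Λ := by rw [← sum_mul, hw_sum, one_mul]

theorem abs_mle_sub_le {Λ : ℝ} (hv : ∀ S g, |v (insert g S) - v S| ≤ Λ) {x y : Fin m → ℝ}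
    (hx : ∀ i, x i ∈ Set.Icc 0 1) (hy : ∀ i, y i ∈ Set.Icc 0 1) :
    |mle m v x - mle m v y| ≤ Λ * ∑ i, |x i - y i| :=
  abs_sub_le_mul_sum_of_abs_update_sub_le (fun _ hz j t _ => abs_mle_update_sub_le v hv hz j t)
    hx hy

end MultilinearExtension

theorem sum_range_abs_sub_of_monotone {α : Type*} [AddCommGroup α] [LinearOrder α]
    [IsOrderedAddMonoid α] {g : ℕ → α} (hg : Monotone g) (n : ℕ) :
    ∑ k ∈ range n, |g (k + 1) - g k| = g n - g 0 := by
  rw [← sum_range_sub]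
  exact sum_congr rfl fun k _ => abs_of_nonneg (sub_nonneg.2 (hg k.le_succ))

section CakeConstruction

lemma bcomp_mem_Icc (m k : ℕ) (ℓ r : ℝ) : bcomp m k ℓ r ∈ Set.Icc 0 1 := by
  refine ⟨mul_nonneg m.cast_nonneg (le_max_left _ _), ?_⟩
  have hlen : max 0 (min r ((k : ℝ) / m) - max ℓ (((k : ℝ) - 1) / m)) ≤ (m : ℝ)⁻¹ := by
    refine max_le (by positivity) ?_
    have hwidth : (k : ℝ) / m - ((k : ℝ) - 1) / m = (m : ℝ)⁻¹ := by ring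
    linarith [min_le_right r ((k : ℝ) / m), le_max_right ℓ (((k : ℝ) - 1) / m)]
  exact (mul_le_mul_of_nonneg_left hlen m.cast_nonneg).trans mul_inv_le_one

lemma bcomp_succ_eq (m k : ℕ) (ℓ r : ℝ) :
    bcomp m (k + 1) ℓ r =
      m * (max ℓ (min r (((k : ℝ) + 1) / m)) - max ℓ (min r ((k : ℝ) / m))) := by
  have hcell : (k : ℝ) / m ≤ ((k : ℝ) + 1) / m := by gcongr; linarith
  rw [bcomp, Nat.cast_succ, add_sub_cancel_right]
  congr 1
  simp only [max_def, min_def]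
  split_ifs <;> linarith

lemma monotone_clamp_sub_clamp {ℓ r ℓ' r' : ℝ} (hℓ : ℓ ≤ ℓ') (hr : r' ≤ r) :
    Monotone fun t : ℝ => max ℓ (min r t) - max ℓ' (min r' t) := by
  intro s t hst
  simp only [max_def, min_def]
  split_ifs <;> linarith

lemma clamp_sub_clamp_mem_Icc {ℓ r ℓ' r' : ℝ} (hℓ : ℓ ≤ ℓ') (hr : r' ≤ r) (t : ℝ) :
    max ℓ (min r t) - max ℓ' (min r' t) ∈ Set.Icc (ℓ - ℓ') (r - r') := by
  simp only [Set.mem_Icc, max_def, min_def]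
  split_ifs <;> constructor <;> linarith

lemma sum_abs_bcomp_sub_le_of_le (m : ℕ) {ℓ r ℓ' r' : ℝ} (hℓ : ℓ ≤ ℓ') (hr : r' ≤ r) :
    ∑ k ∈ range m, |bcomp m (k + 1) ℓ r - bcomp m (k + 1) ℓ' r'| ≤
      m * (ℓ' - ℓ + (r - r')) := by
  set g : ℕ → ℝ := fun k => max ℓ (min r ((k : ℝ) / m)) - max ℓ' (min r' ((k : ℝ) / m))
  have hg : Monotone g := (monotone_clamp_sub_clamp hℓ hr).comp fun a b hab => by gcongr
  have hterm : ∀ k, |bcomp m (k + 1) ℓ r - bcomp m (k + 1) ℓ' r'| = m * |g (k + 1) - g k| := by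
    intro k
    rw [bcomp_succ_eq, bcomp_succ_eq, ← mul_sub, abs_mul, Nat.abs_cast]
    push_cast [g]
    ring_nf
  rw [sum_congr rfl fun k _ => hterm k, ← mul_sum, sum_range_abs_sub_of_monotone hg]
  have hgm : g m ∈ Set.Icc (ℓ - ℓ') (r - r') := clamp_sub_clamp_mem_Icc hℓ hr _
  have hg0 : g 0 ∈ Set.Icc (ℓ - ℓ') (r - r') := clamp_sub_clamp_mem_Icc hℓ hr _
  exact mul_le_mul_of_nonneg_left (by linarith [hgm.2, hg0.1]) m.cast_nonneg

theorem sum_abs_bcomp_sub_le (m : ℕ) (ℓ r ℓ' r' : ℝ) :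
    ∑ k : Fin m, |bcomp m (k + 1) ℓ r - bcomp m (k + 1) ℓ' r'| ≤
      m * (|ℓ - ℓ'| + |r - r'|) := by
  rw [Fin.sum_univ_eq_sum_range (fun k => |bcomp m (k + 1) ℓ r - bcomp m (k + 1) ℓ' r'|)]
  have hhull := sum_abs_bcomp_sub_le_of_le m (min_le_left ℓ ℓ') (le_max_left r r')
  have hhull' := sum_abs_bcomp_sub_le_of_le m (min_le_right ℓ ℓ') (le_max_right r r')
  calc ∑ k ∈ range m, |bcomp m (k + 1) ℓ r - bcomp m (k + 1) ℓ' r'|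
      ≤ ∑ k ∈ range m, (|bcomp m (k + 1) (min ℓ ℓ') (max r r') - bcomp m (k + 1) ℓ r| +
          |bcomp m (k + 1) (min ℓ ℓ') (max r r') - bcomp m (k + 1) ℓ' r'|) :=
        sum_le_sum fun k _ => by
          rw [abs_sub_comm (bcomp m (k + 1) (min ℓ ℓ') (max r r'))]; exact abs_sub_le _ _ _
    _ ≤ m * (ℓ - min ℓ ℓ' + (max r r' - r)) + m * (ℓ' - min ℓ ℓ' + (max r r' - r')) := by
        rw [sum_add_distrib]; exact add_le_add hhull hhull'
    _ = m * (|ℓ - ℓ'| + |r - r'|) := by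
        rw [abs_sub_comm ℓ, abs_sub_comm r, ← max_sub_min_eq_abs ℓ, ← max_sub_min_eq_abs r]
        linear_combination (m : ℝ) * min_add_max r r' - (m : ℝ) * min_add_max ℓ ℓ'

end CakeConstruction

theorem stmt_8_general (m : ℕ) (Λ : ℝ) (hΛ : 0 < Λ)
    (v : Finset (Fin m) → ℝ)
    (hnonneg : ∀ S, 0 ≤ v S)
    (hmarg : ∀ (S : Finset (Fin m)) (g : Fin m), |v (insert g S) - v S| ≤ Λ)
    (f : ℝ → ℝ → ℝ)
    (hf : ∀ ℓ r : ℝ, 0 ≤ ℓ → ℓ ≤ r → r ≤ 1 →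
      f ℓ r = mle m v (fun k : Fin m => bcomp m (k.val + 1) ℓ r)) :
    (∀ ℓ r : ℝ, 0 ≤ ℓ → ℓ ≤ r → r ≤ 1 → 0 ≤ f ℓ r) ∧
    (∀ ℓ r ℓ' r' : ℝ, 0 ≤ ℓ → ℓ ≤ r → r ≤ 1 → 0 ≤ ℓ' → ℓ' ≤ r' → r' ≤ 1 →
      |f ℓ r - f ℓ' r'| ≤ (m : ℝ) * Λ * (|ℓ - ℓ'| + |r - r'|)) := by
  have hb : ∀ ℓ r (k : Fin m), bcomp m (k.val + 1) ℓ r ∈ Set.Icc 0 1 :=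
    fun ℓ r k => bcomp_mem_Icc m _ ℓ r
  refine ⟨fun ℓ r h0 hℓr h1 => ?_, fun ℓ r ℓ' r' h0 hℓr h1 h0' hℓr' h1' => ?_⟩
  · rw [hf ℓ r h0 hℓr h1]
    exact mle_nonneg v hnonneg (hb ℓ r)
  · rw [hf ℓ r h0 hℓr h1, hf ℓ' r' h0' hℓr' h1']
    calc _ ≤ Λ * ∑ k : Fin m, |bcomp m (k + 1) ℓ r - bcomp m (k + 1) ℓ' r'| :=
          abs_mle_sub_le v hmarg (hb ℓ r) (hb ℓ' r')
      _ ≤ Λ * (m * (|ℓ - ℓ'| + |r - r'|)) :=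
          mul_le_mul_of_nonneg_left (sum_abs_bcomp_sub_le m ℓ r ℓ' r') hΛ.le
      _ = m * Λ * (|ℓ - ℓ'| + |r - r'|) := by ring

/-- **The cake valuation `f = V ∘ b` built by `CakeConstruction` from a
nonnegative valuation `v` with marginal values at most `Λ` is nonnegative
on intervals and `(mΛ)`-Lipschitz.** -/
theorem stmt_8 (m : ℕ) (hm : 1 ≤ m) (Λ : ℝ) (hΛ : 0 < Λ)
    (v : Finset (Fin m) → ℝ)
    (hnonneg : ∀ S, 0 ≤ v S)
    (hmarg : ∀ (S : Finset (Fin m)) (g : Fin m), |v (insert g S) - v S| ≤ Λ)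
    (f : ℝ → ℝ → ℝ)
    (hf : ∀ ℓ r : ℝ, 0 ≤ ℓ → ℓ ≤ r → r ≤ 1 →
      f ℓ r = mle m v (fun k : Fin m => bcomp m (k.val + 1) ℓ r)) :
    (∀ ℓ r : ℝ, 0 ≤ ℓ → ℓ ≤ r → r ≤ 1 → 0 ≤ f ℓ r) ∧
    (∀ ℓ r ℓ' r' : ℝ, 0 ≤ ℓ → ℓ ≤ r → r ≤ 1 → 0 ≤ ℓ' → ℓ' ≤ r' → r' ≤ 1 →
      |f ℓ r - f ℓ' r'| ≤ (m : ℝ) * Λ * (|ℓ - ℓ'| + |r - r'|)) :=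
  stmt_8_general m Λ hΛ v hnonneg hmarg f hf
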